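/- Let d and d' be two metrics on a set M inducing the same topology, and let φ : ℝ → M be a curve such that the closure of {φ(t) : t ≥ 0} is compact. Then for every ε > 0 there exists ε' > 0 such that for any curve ψ : ℝ → M, if sup_{t ≥ 0} d'(φ(t), ψ(t)) < ε' then sup_{t ≥ 0} d(φ(t), ψ(t)) < ε. -/

import Mathlib

open Metric Set

lemma key_6 {M : Type*} (m m' : MetricSpace M)
    (hT : m.toUniformSpace.toTopologicalSpace = m'.toUniformSpace.toTopologicalSpace)
    {K : Set M}
    (hK : @IsCompact M m.toUniformSpace.toTopologicalSpace K)
    {ε : ℝ} (hε : 0 < ε) :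
    ∃ ε' > (0 : ℝ), ∀ x ∈ K, ∀ y : M,
      @dist M m'.toDist x y < ε' → @dist M m.toDist x y < ε := by
  classical
  -- for each x, choose r x > 0 with m'-ball x (r x) ⊆ m-ball x (ε/2)
  have hball : ∀ x : M, ∃ r > (0 : ℝ),
      @Metric.ball M m'.toPseudoMetricSpace x r ⊆ @Metric.ball M m.toPseudoMetricSpace x (ε/2) := by
    intro x
    have hopen : @IsOpen M m'.toUniformSpace.toTopologicalSpace
        (@Metric.ball M m.toPseudoMetricSpace x (ε/2)) := by
      rw [← hT]; exact @Metric.isOpen_ball M m.toPseudoMetricSpace x (ε/2)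
    have hx : x ∈ @Metric.ball M m.toPseudoMetricSpace x (ε/2) :=
      @Metric.mem_ball_self M m.toPseudoMetricSpace x (ε/2) (by linarith)
    rcases (@Metric.isOpen_iff M m'.toPseudoMetricSpace _).mp hopen x hx with ⟨r, hr, hsub⟩
    exact ⟨r, hr, hsub⟩
  choose r hr hsub using hball
  -- cover K by m'-balls of radius r x / 2 centered at points of K
  have hcov : K ⊆ ⋃ x : K, @Metric.ball M m'.toPseudoMetricSpace (x : M) (r x / 2) := by
    intro x hx
    exact Set.mem_iUnion.mpr ⟨⟨x, hx⟩, @Metric.mem_ball_self M m'.toPseudoMetricSpace x _ (by linarith [hr x])⟩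
  have hopen' : ∀ x : K, @IsOpen M m.toUniformSpace.toTopologicalSpace
      (@Metric.ball M m'.toPseudoMetricSpace (x : M) (r x / 2)) := by
    intro x; rw [hT]; exact @Metric.isOpen_ball M m'.toPseudoMetricSpace _ _
  rcases @IsCompact.elim_finite_subcover M m.toUniformSpace.toTopologicalSpace K K hK _ hopen' hcov with ⟨s, hs⟩
  by_cases hne : s.Nonempty
  · refine ⟨Finset.min' (s.image (fun x : K => r (x : M) / 2)) (hne.image _), ?_, ?_⟩
    · rcases Finset.mem_image.mp (Finset.min'_mem (s.image (fun x : K => r (x : M) / 2)) (hne.image _)) with ⟨x, _, hx⟩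
      rw [← hx]; linarith [hr (x : M)]
    · intro x hx y hy
      rcases Set.mem_iUnion₂.mp (hs hx) with ⟨i, hi, hxi⟩
      have h1 : @dist M m'.toDist x (i : M) < r i / 2 := hxi
      have hmin : Finset.min' (s.image (fun x : K => r (x : M) / 2)) (hne.image _) ≤ r i / 2 :=
        Finset.min'_le _ _ (Finset.mem_image.mpr ⟨i, hi, rfl⟩)
      have h2 : @dist M m'.toDist y (i : M) < r i := by
        calc @dist M m'.toDist y (i : M)
            ≤ @dist M m'.toDist y x + @dist M m'.toDist x (i : M) :=
              @dist_triangle M m'.toPseudoMetricSpace _ _ _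
          _ < r i / 2 + r i / 2 := by
              have hc := @dist_comm M m'.toPseudoMetricSpace x y
              have : @dist M m'.toDist y x < r i / 2 := by rw [← hc]; linarith
              linarith
          _ = r i := by ring
      have h3 : @dist M m.toDist y (i : M) < ε / 2 := hsub (i : M) h2
      have h4 : @dist M m.toDist x (i : M) < ε / 2 := hsub (i : M) (by
        show @dist M m'.toDist x (i : M) < r i
        linarith [hr (i : M)])
      calc @dist M m.toDist x y
          ≤ @dist M m.toDist x (i : M) + @dist M m.toDist (i : M) y :=
            @dist_triangle M m.toPseudoMetricSpace _ _ _
        _ < ε/2 + ε/2 := by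
            have hc := @dist_comm M m.toPseudoMetricSpace (i : M) y
            have : @dist M m.toDist (i : M) y < ε / 2 := by rw [hc]; exact h3
            linarith
        _ = ε := by ring
  · refine ⟨1, one_pos, ?_⟩
    intro x hx y _
    exact absurd (hs hx) (by simp [Finset.not_nonempty_iff_eq_empty.mp hne])

/-- Two metrics inducing the same topology give equivalent local bases of the
sup-over-[0,∞) pseudo-metric at a curve with compact forward closure. -/
theorem stmt_6 {M : Type*} (m m' : MetricSpace M)
    (hT : m.toUniformSpace.toTopologicalSpace = m'.toUniformSpace.toTopologicalSpace)
    (φ : ℝ → M)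
    (hb : @IsCompact M m.toUniformSpace.toTopologicalSpace
      (@closure M m.toUniformSpace.toTopologicalSpace (φ '' Set.Ici 0))) :
    ∀ ε > (0 : ℝ), ∃ ε' > (0 : ℝ), ∀ ψ : ℝ → M,
      (⨆ t : Set.Ici (0 : ℝ), @edist M m'.toEDist (φ t) (ψ t)) < ENNReal.ofReal ε' →
      (⨆ t : Set.Ici (0 : ℝ), @edist M m.toEDist (φ t) (ψ t)) < ENNReal.ofReal ε := by
  intro ε hε
  obtain ⟨ε', hε', hkey⟩ := key_6 m m' hT hb (half_pos hε)
  refine ⟨ε', hε', ?_⟩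
  intro ψ hψ
  have hle : (⨆ t : Set.Ici (0 : ℝ), @edist M m.toEDist (φ t) (ψ t)) ≤ ENNReal.ofReal (ε/2) := by
    refine iSup_le fun t => ?_
    have h1 : @edist M m'.toEDist (φ t) (ψ t) < ENNReal.ofReal ε' :=
      lt_of_le_of_lt (le_iSup (fun t : Set.Ici (0:ℝ) => @edist M m'.toEDist (φ t) (ψ t)) t) hψ
    have h2 : @dist M m'.toDist (φ t) (ψ t) < ε' := by
      rw [@edist_dist M m'.toPseudoMetricSpace] at h1
      exact (ENNReal.ofReal_lt_ofReal_iff_of_nonneg (@dist_nonneg M m'.toPseudoMetricSpace _ _)).mp h1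
    have hmem : φ t ∈ @closure M m.toUniformSpace.toTopologicalSpace (φ '' Set.Ici 0) :=
      @subset_closure M m.toUniformSpace.toTopologicalSpace (φ '' Set.Ici 0) (φ t) ⟨t, t.2, rfl⟩
    have h3 : @dist M m.toDist (φ t) (ψ t) < ε/2 := hkey _ hmem _ h2
    rw [@edist_dist M m.toPseudoMetricSpace]
    exact ENNReal.ofReal_le_ofReal h3.le
  exact lt_of_le_of_lt hle (ENNReal.ofReal_lt_ofReal_iff hε |>.mpr (by linarith))
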